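/- Let t ≥ 4, k₁,…,k_t ≥ 1, and G = G(t; k₁,…,k_t). Then the 2-domination number of G equals γ₂(G) = 4·∑_{i=1}^{t} k_i + t. -/

import Mathlib

open Classical Finset
noncomputable section

/-- `S` is a 2-dominating set of `G`: every vertex outside `S` has ≥ 2 neighbors in `S`. -/
def IsTwoDomSet {V : Type*} [Fintype V] (G : SimpleGraph V) (S : Finset V) : Prop :=
  ∀ v, v ∉ S → 2 ≤ (G.neighborFinset v ∩ S).card

/-- The 2-domination number. -/
noncomputable def gamma2 {V : Type*} [Fintype V] (G : SimpleGraph V) : ℕ :=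
  sInf {k | ∃ S : Finset V, IsTwoDomSet G S ∧ S.card = k}

/-- `S` is an annihilation set of `G`: the sum of degrees over `S` is at most `m(G)`. -/
def IsAnnSet {V : Type*} [Fintype V] (G : SimpleGraph V) (S : Finset V) : Prop :=
  ∑ v ∈ S, G.degree v ≤ G.edgeFinset.card

/-- The annihilation number: the largest size of an annihilation set (equivalently, the
largest `k` such that the sum of the `k` smallest degrees is at most the edge count). -/
noncomputable def annihilation {V : Type*} [Fintype V] (G : SimpleGraph V) : ℕ :=
  sSup {k | ∃ S : Finset V, IsAnnSet G S ∧ S.card = k}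

/-- Vertices of `G(t; k₁,…,k_t)`: `none` is the hub `w`; `some (Sum.inl ⟨i, j⟩)` is the
`j`-th vertex of the `i`-th cycle `C_{3kᵢ+1}` (vertex `0` is joined to `w`);
`some (Sum.inr ⟨i, p⟩)` is the pendant vertex attached to cycle vertex `p + 1`. -/
abbrev GVert (t : ℕ) (k : Fin t → ℕ) : Type :=
  Option ((Σ i : Fin t, Fin (3 * k i + 1)) ⊕ (Σ i : Fin t, Fin (3 * k i)))

/-- The counterexample graph `G(t; k₁,…,k_t)`. -/
def GG (t : ℕ) (k : Fin t → ℕ) : SimpleGraph (GVert t k) :=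
  SimpleGraph.fromRel (fun a b =>
    match a, b with
    | none, some (Sum.inl ⟨_, j⟩) => (j : ℕ) = 0
    | some (Sum.inl ⟨i, a⟩), some (Sum.inl ⟨i', b⟩) =>
        i = i' ∧ ((b : ℕ) = (a : ℕ) + 1 ∨ ((a : ℕ) = 3 * k i ∧ (b : ℕ) = 0))
    | some (Sum.inl ⟨i, a⟩), some (Sum.inr ⟨i', p⟩) => i = i' ∧ (a : ℕ) = (p : ℕ) + 1
    | _, _ => False)

/-!
Every pendant vertex lies in every 2-dominating set, and every three cyclically consecutive
vertices of a cycle `C_{3k+1}` meet it (otherwise the middle one has only its outer neighbour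
left in the set), so it contains at least `k + 1` vertices of that cycle. This gives
`3 ∑ kᵢ + ∑ (kᵢ + 1)` as a lower bound. It is attained by all pendants together with the cycle
vertices of index divisible by `3`: the remaining cycle vertices see their pendant and an
adjacent multiple of `3`, and the hub sees the vertex `0` of two different cycles.
-/

open scoped Pointwise in
theorem Fin.le_three_mul_card_of_forall_window {n : ℕ} [NeZero n] (T : Finset (Fin n))
    (h : ∀ x, x ∈ T ∨ x + 1 ∈ T ∨ x + 2 ∈ T) : n ≤ 3 * #T := by
  have hcover : (univ : Finset (Fin n)) ⊆ T + ({0, -1, -2} : Finset (Fin n)) := by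
    intro x _
    rw [Finset.mem_add]
    rcases h x with hx | hx | hx
    · exact ⟨x, hx, 0, by simp, add_zero x⟩
    · exact ⟨x + 1, hx, -1, by simp, add_neg_cancel_right x 1⟩
    · exact ⟨x + 2, hx, -2, by simp, add_neg_cancel_right x 2⟩
  calc n = #(univ : Finset (Fin n)) := (card_fin n).symm
    _ ≤ #T * #({0, -1, -2} : Finset (Fin n)) := (card_le_card hcover).trans card_add_le
    _ ≤ #T * 3 := Nat.mul_le_mul_left _ card_le_three
    _ = 3 * #T := Nat.mul_comm _ _

theorem Fin.eq_add_one_iff_val {m : ℕ} (a b : Fin (m + 1)) :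
    b = a + 1 ↔ (b : ℕ) = a + 1 ∨ ((a : ℕ) = m ∧ (b : ℕ) = 0) := by
  rw [Fin.ext_iff, Fin.val_add_one]
  have := b.isLt
  split_ifs with h
  · simp only [val_eq_zero_iff, h, val_last, true_and, iff_or_self]
    omega
  · have : (a : ℕ) ≠ m := fun e => h (Fin.ext e)
    omega

def multiplesOfThree (m : ℕ) : Finset (Fin (3 * m + 1)) :=
  univ.image fun j : Fin (m + 1) => ⟨3 * j, by omega⟩

theorem card_multiplesOfThree (m : ℕ) : #(multiplesOfThree m) = m + 1 := by
  rw [multiplesOfThree, card_image_of_injective, card_univ, Fintype.card_fin]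
  intro a b h
  simp only [Fin.mk.injEq] at h
  exact Fin.ext (by omega)

theorem mem_multiplesOfThree {m : ℕ} {j : Fin (3 * m + 1)} (h : (j : ℕ) % 3 = 0) :
    j ∈ multiplesOfThree m :=
  mem_image.mpr ⟨⟨j / 3, by omega⟩, mem_univ _, Fin.ext (by simp only; omega)⟩

section TwoDomination

variable {V : Type*} {G : SimpleGraph V} {S : Finset V}

theorem two_le_card_neighborFinset_inter {v a b : V} [Fintype (G.neighborSet v)] (hab : a ≠ b)
    (ha : G.Adj v a) (hb : G.Adj v b) (haS : a ∈ S) (hbS : b ∈ S) :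
    2 ≤ #(G.neighborFinset v ∩ S) := by
  rw [← card_pair hab]
  apply card_le_card
  intro x hx
  rcases mem_insert.mp hx with rfl | hx
  · simpa using ⟨ha, haS⟩
  · rw [mem_singleton.mp hx]
    simpa using ⟨hb, hbS⟩

theorem IsTwoDomSet.mem_of_forall_adj_mem_eq [Fintype V] (hS : IsTwoDomSet G S) {v : V} (e : V)
    (h : ∀ u, G.Adj v u → u ∈ S → u = e) : v ∈ S := by
  by_contra hv
  have hsub : G.neighborFinset v ∩ S ⊆ {e} := fun u hu => by
    rw [mem_inter, SimpleGraph.mem_neighborFinset] at hu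
    exact mem_singleton.mpr (h u hu.1 hu.2)
  have := (card_le_card hsub).trans_eq (card_singleton e)
  have := hS v hv
  omega

end TwoDomination

namespace GG

variable {t : ℕ} {k : Fin t → ℕ}

def cyc (i : Fin t) (j : Fin (3 * k i + 1)) : GVert t k := some (Sum.inl ⟨i, j⟩)

def pend (i : Fin t) (p : Fin (3 * k i)) : GVert t k := some (Sum.inr ⟨i, p⟩)

def outerNbr (i : Fin t) (j : Fin (3 * k i + 1)) : GVert t k :=
  if h : (j : ℕ) = 0 then none else pend i ⟨j - 1, by omega⟩

theorem eq_of_adj_cyc {i : Fin t} {b : Fin (3 * k i + 1)} {u : GVert t k}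
    (h : (GG t k).Adj (cyc i b) u) : u = cyc i (b + 1) ∨ u = cyc i (b - 1) ∨ u = outerNbr i b := by
  rw [GG, SimpleGraph.fromRel_adj] at h
  obtain ⟨-, h⟩ := h
  rcases u with _ | ⟨i', c⟩ | ⟨i', p⟩
  · rcases h with h | (h : (b : ℕ) = 0)
    · simp at h
    · simp [outerNbr, h]
  · rcases h with ⟨rfl, hc⟩ | ⟨rfl, hc⟩
    · simp [cyc, (Fin.eq_add_one_iff_val b c).mpr hc]
    · simp [cyc, (Fin.eq_add_one_iff_val c b).mpr hc]
  · rcases h with ⟨rfl, hc⟩ | h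
    · have hb : (b : ℕ) ≠ 0 := by omega
      have hp : p = ⟨b - 1, by omega⟩ := Fin.ext (by simp only; omega)
      simp [outerNbr, hb, pend, hp]
    · simp at h

theorem eq_of_adj_pend {i : Fin t} {p : Fin (3 * k i)} {u : GVert t k}
    (h : (GG t k).Adj (pend i p) u) : u = cyc i ⟨p + 1, by omega⟩ := by
  rw [GG, SimpleGraph.fromRel_adj] at h
  obtain ⟨-, h⟩ := h
  rcases u with _ | ⟨i', c⟩ | ⟨i', p'⟩
  · simp [pend] at h
  · rcases h with h | ⟨rfl, hc⟩
    · simp [pend] at h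
    · simp [cyc, Fin.ext_iff, hc]
  · simp [pend] at h

theorem adj_none_cyc {i : Fin t} {j : Fin (3 * k i + 1)} (h : (j : ℕ) = 0) :
    (GG t k).Adj none (cyc i j) := by
  rw [GG, SimpleGraph.fromRel_adj]
  exact ⟨by simp [cyc], Or.inl h⟩

theorem adj_cyc_cyc {i : Fin t} {a b : Fin (3 * k i + 1)} (h : (b : ℕ) = a + 1) :
    (GG t k).Adj (cyc i a) (cyc i b) := by
  rw [GG, SimpleGraph.fromRel_adj]
  refine ⟨?_, Or.inl ⟨rfl, Or.inl h⟩⟩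
  simp only [cyc, ne_eq, Option.some.injEq, Sum.inl.injEq, Sigma.mk.injEq, heq_eq_eq, Fin.ext_iff,
    true_and]
  omega

theorem adj_cyc_pend {i : Fin t} {a : Fin (3 * k i + 1)} {p : Fin (3 * k i)}
    (h : (a : ℕ) = p + 1) : (GG t k).Adj (cyc i a) (pend i p) := by
  rw [GG, SimpleGraph.fromRel_adj]
  exact ⟨by simp [cyc, pend], Or.inl ⟨rfl, h⟩⟩

def pendants : Finset (GVert t k) := univ.image fun q => some (Sum.inr q)

def cycleSet (T : ∀ i, Finset (Fin (3 * k i + 1))) : Finset (GVert t k) :=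
  (univ.sigma T).image fun q => some (Sum.inl q)

theorem pend_mem_pendants (i : Fin t) (p : Fin (3 * k i)) : pend i p ∈ pendants (k := k) :=
  mem_image_of_mem _ (mem_univ (⟨i, p⟩ : Σ i, Fin (3 * k i)))

theorem cyc_mem_cycleSet {T : ∀ i, Finset (Fin (3 * k i + 1))} {i : Fin t}
    {j : Fin (3 * k i + 1)} (h : j ∈ T i) : cyc i j ∈ cycleSet T :=
  mem_image_of_mem _ (mem_sigma.mpr ⟨mem_univ i, h⟩)

theorem card_pendants_union_cycleSet (T : ∀ i, Finset (Fin (3 * k i + 1))) :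
    #(pendants ∪ cycleSet T) = 3 * ∑ i, k i + ∑ i, #(T i) := by
  have hinl {α β : Type} : Function.Injective fun q : α => (some (Sum.inl q) : Option (α ⊕ β)) :=
    Option.some_injective _ |>.comp Sum.inl_injective
  have hinr {α β : Type} : Function.Injective fun q : β => (some (Sum.inr q) : Option (α ⊕ β)) :=
    Option.some_injective _ |>.comp Sum.inr_injective
  rw [card_union_of_disjoint, pendants, cycleSet, card_image_of_injective _ hinl,
    card_image_of_injective _ hinr,
    card_sigma, card_univ, Fintype.card_sigma, mul_sum]
  · simp
  · refine disjoint_left.mpr fun v hp hc => ?_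
    obtain ⟨_, -, rfl⟩ := mem_image.mp hp
    obtain ⟨_, -, h⟩ := mem_image.mp hc
    cases h

def twoDomSet (t : ℕ) (k : Fin t → ℕ) : Finset (GVert t k) :=
  pendants ∪ cycleSet fun i => multiplesOfThree (k i)

theorem card_twoDomSet : #(twoDomSet t k) = 4 * ∑ i, k i + t := by
  rw [twoDomSet, card_pendants_union_cycleSet]
  simp only [card_multiplesOfThree, sum_add_distrib, sum_const, card_univ, Fintype.card_fin,
    smul_eq_mul, mul_one]
  ring

theorem isTwoDomSet_twoDomSet (ht : 2 ≤ t) : IsTwoDomSet (GG t k) (twoDomSet t k) := by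
  have hcyc {i : Fin t} {j : Fin (3 * k i + 1)} (h : (j : ℕ) % 3 = 0) : cyc i j ∈ twoDomSet t k :=
    mem_union_right _ (cyc_mem_cycleSet (mem_multiplesOfThree h))
  have hpend (i : Fin t) (p : Fin (3 * k i)) : pend i p ∈ twoDomSet t k :=
    mem_union_left _ (pend_mem_pendants i p)
  rintro (_ | ⟨i, j⟩ | ⟨i, p⟩) hv
  · exact two_le_card_neighborFinset_inter (a := cyc ⟨0, by omega⟩ 0) (b := cyc ⟨1, by omega⟩ 0)
      (by simp [cyc]) (adj_none_cyc rfl) (adj_none_cyc rfl) (hcyc rfl) (hcyc rfl)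
  · have hj : (j : ℕ) % 3 ≠ 0 := fun h => hv (hcyc h)
    have hp : (GG t k).Adj (cyc i j) (pend i ⟨j - 1, by omega⟩) :=
      adj_cyc_pend (by simp only; omega)
    rcases (by omega : (j : ℕ) % 3 = 1 ∨ (j : ℕ) % 3 = 2) with h | h
    · exact two_le_card_neighborFinset_inter (by simp [pend, cyc]) hp
        (adj_cyc_cyc (a := ⟨j - 1, by omega⟩) (b := j) (by simp only; omega)).symm
        (hpend _ _) (hcyc (by simp only; omega))
    · exact two_le_card_neighborFinset_inter (by simp [pend, cyc]) hp
        (adj_cyc_cyc (b := ⟨j + 1, by omega⟩) (by simp)) (hpend _ _)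
        (hcyc (by simp only; omega))
  · exact absurd (hpend i p) hv

section LowerBound

variable {S : Finset (GVert t k)} (hS : IsTwoDomSet (GG t k) S)
include hS

theorem pend_mem_of_isTwoDomSet (i : Fin t) (p : Fin (3 * k i)) : pend i p ∈ S :=
  hS.mem_of_forall_adj_mem_eq _ fun _ hu _ => eq_of_adj_pend hu

theorem cyc_mem_window_of_isTwoDomSet (i : Fin t) (x : Fin (3 * k i + 1)) :
    cyc i x ∈ S ∨ cyc i (x + 1) ∈ S ∨ cyc i (x + 2) ∈ S := by
  by_contra! hx
  obtain ⟨h0, h1, h2⟩ := hx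
  refine h1 (hS.mem_of_forall_adj_mem_eq (outerNbr i (x + 1)) fun u hu huS => ?_)
  rcases eq_of_adj_cyc hu with rfl | rfl | rfl
  · rw [show x + 1 + 1 = x + 2 by grind] at huS
    exact absurd huS h2
  · rw [add_sub_cancel_right] at huS
    exact absurd huS h0
  · rfl

theorem succ_le_card_cycle_of_isTwoDomSet (i : Fin t) : k i + 1 ≤ #{j | cyc i j ∈ S} := by
  have := Fin.le_three_mul_card_of_forall_window {j | cyc i j ∈ S}
    (by simpa using cyc_mem_window_of_isTwoDomSet hS i)
  omega

theorem le_card_of_isTwoDomSet : 4 * ∑ i, k i + t ≤ #S := calc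
  4 * ∑ i, k i + t ≤ 3 * ∑ i, k i + ∑ i, #{j | cyc i j ∈ S} := by
    have := sum_le_sum fun i (_ : i ∈ univ) => succ_le_card_cycle_of_isTwoDomSet hS i
    simp only [sum_add_distrib, sum_const, card_univ, Fintype.card_fin, smul_eq_mul,
      mul_one] at this
    omega
  _ = #(pendants ∪ cycleSet fun i => {j | cyc i j ∈ S}) := (card_pendants_union_cycleSet _).symm
  _ ≤ #S := by
    refine card_le_card (union_subset (fun v hv => ?_) (fun v hv => ?_))
    · obtain ⟨⟨i, p⟩, -, rfl⟩ := mem_image.mp hv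
      exact pend_mem_of_isTwoDomSet hS i p
    · obtain ⟨⟨i, j⟩, hq, rfl⟩ := mem_image.mp hv
      exact (mem_filter.mp (mem_sigma.mp hq).2).2

end LowerBound

end GG

theorem stmt10_general (t : ℕ) (ht : 4 ≤ t) (k : Fin t → ℕ) :
    gamma2 (GG t k) = 4 * ∑ i, k i + t :=
  IsLeast.csInf_eq ⟨⟨_, GG.isTwoDomSet_twoDomSet (by omega), GG.card_twoDomSet⟩,
    by rintro _ ⟨S, hS, rfl⟩; exact GG.le_card_of_isTwoDomSet hS⟩

/-- `γ₂(G(t;k₁,…,k_t)) = 4·∑ᵢ kᵢ + t`. -/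
theorem stmt10 (t : ℕ) (ht : 4 ≤ t) (k : Fin t → ℕ) (hk : ∀ i, 1 ≤ k i) :
    gamma2 (GG t k) = 4 * ∑ i, k i + t :=
  stmt10_general t ht k
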